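/- There is a unique homomorphism of ℂ[x_1^{±1},…,x_d^{±1}]-modules φ : PL → ℂ(x_1,…,x_d) such that for every simple rational cone K = v + ℝ_{≥0}w_1 + ⋯ + ℝ_{≥0}w_d with fundamental parallelepiped P_K, φ(S_K) = σ_{P_K}(x) / ∏_{i=1}^d (1 − x^{w_i}), where σ_{P_K}(x) = Σ_{m ∈ P_K∩ℤ^d} x^m is a Laurent polynomial. -/

import Mathlib

open scoped BigOperators Classical

noncomputable section

/-- The real vector corresponding to an integer vector. -/
def toR (d : ℕ) (m : Fin d → ℤ) : Fin d → ℝ := fun i => (m i : ℝ)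

/-- The standard dot product on `ℝ^d`. -/
def dotR (d : ℕ) (x y : Fin d → ℝ) : ℝ := ∑ i, x i * y i

/-- Laurent polynomials `ℂ[x₁^{±1},…,x_d^{±1}]`, represented by their coefficient functions. -/
abbrev LaurentPoly (d : ℕ) := (Fin d → ℤ) →₀ ℂ

/-- The integer-point generating series of a subset of `ℝ^d`: the function `ℤ^d → ℂ`
equal to `1` on `S ∩ ℤ^d` and `0` elsewhere. -/
def genSeries (d : ℕ) (S : Set (Fin d → ℝ)) : (Fin d → ℤ) → ℂ :=
  fun m => if toR d m ∈ S then 1 else 0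

/-- The action of a Laurent polynomial on a formal Laurent series,
`(x^w · S)(m) = S(m - w)` extended linearly. -/
def actLP (d : ℕ) (g : LaurentPoly d) (S : (Fin d → ℤ) → ℂ) : (Fin d → ℤ) → ℂ :=
  fun m => ∑ w ∈ g.support, g w * S (m - w)

/-- The series of a Laurent polynomial `f`, i.e. `Σ_m f_m x^m` as a formal series. -/
def seriesOf (d : ℕ) (f : LaurentPoly d) : (Fin d → ℤ) → ℂ := fun m => f m

/-- The cone `v + ℝ_{≥0} w₁ + ⋯ + ℝ_{≥0} w_n`. -/
def coneSet (d n : ℕ) (v : Fin d → ℝ) (w : Fin n → Fin d → ℤ) : Set (Fin d → ℝ) :=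
  {y | ∃ lam : Fin n → ℝ, (∀ i, 0 ≤ lam i) ∧ y = v + ∑ i, lam i • toR d (w i)}

/-- The fundamental half-open parallelepiped `{v + Σ λᵢ wᵢ : 0 ≤ λᵢ < 1}`. -/
def parSet (d : ℕ) (v : Fin d → ℝ) (w : Fin d → Fin d → ℤ) : Set (Fin d → ℝ) :=
  {y | ∃ lam : Fin d → ℝ, (∀ i, 0 ≤ lam i ∧ lam i < 1) ∧ y = v + ∑ i, lam i • toR d (w i)}

/-- A simple rational cone: `v + ℝ_{≥0} w₁ + ⋯ + ℝ_{≥0} w_d` with `w₁,…,w_d ∈ ℤ^d`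
linearly independent. -/
def IsSimpleCone (d : ℕ) (K : Set (Fin d → ℝ)) : Prop :=
  ∃ (v : Fin d → ℝ) (w : Fin d → Fin d → ℤ),
    LinearIndependent ℝ (fun i => toR d (w i)) ∧ K = coneSet d d v w

/-- Membership in the module `PL` of polyhedral Laurent series: a finite
`ℂ[x₁^{±1},…,x_d^{±1}]`-linear combination of the series of simple rational cones. -/
def MemPL (d : ℕ) (S : (Fin d → ℤ) → ℂ) : Prop :=
  ∃ (n : ℕ) (g : Fin n → LaurentPoly d) (K : Fin n → Set (Fin d → ℝ)),
    (∀ i, IsSimpleCone d (K i)) ∧ S = ∑ i, actLP d (g i) (genSeries d (K i))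

/-- The field of rational functions `ℂ(x₁,…,x_d)`. -/
abbrev RatF (d : ℕ) := FractionRing (MvPolynomial (Fin d) ℂ)

/-- The monomial `x^w`, `w ∈ ℤ^d`, as a rational function. -/
def ratMon (d : ℕ) (w : Fin d → ℤ) : RatF d :=
  ∏ i, (algebraMap (MvPolynomial (Fin d) ℂ) (RatF d) (MvPolynomial.X i)) ^ (w i)

/-- A Laurent polynomial as a rational function. -/
def toRat (d : ℕ) (g : LaurentPoly d) : RatF d :=
  ∑ w ∈ g.support, algebraMap (MvPolynomial (Fin d) ℂ) (RatF d) (MvPolynomial.C (g w)) * ratMon d w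

/-- `σ_S(x) = Σ_{m ∈ S ∩ ℤ^d} x^m`, as a rational function (for `S` with finitely many
integer points). -/
def sigmaSet (d : ℕ) (S : Set (Fin d → ℝ)) : RatF d :=
  ∑ᶠ m ∈ {m : Fin d → ℤ | toR d m ∈ S}, ratMon d m

/-- `φ : PL → ℂ(x₁,…,x_d)` is the `ℂ[x₁^{±1},…,x_d^{±1}]`-module homomorphism sending the
series `S_K` of a simple rational cone `K` to `σ_{P_K}(x) / Π (1 - x^{wᵢ})`. -/
def IsPhi (d : ℕ) (φ : ((Fin d → ℤ) → ℂ) → RatF d) : Prop :=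
  (∀ S T, MemPL d S → MemPL d T → φ (S + T) = φ S + φ T) ∧
  (∀ (g : LaurentPoly d) (S), MemPL d S → φ (actLP d g S) = toRat d g * φ S) ∧
  (∀ (v : Fin d → ℝ) (w : Fin d → Fin d → ℤ),
      LinearIndependent ℝ (fun i => toR d (w i)) →
      φ (genSeries d (coneSet d d v w)) =
        sigmaSet d (parSet d v w) / ∏ i, (1 - ratMon d (w i)))

/-- A convex polyhedron: an intersection of finitely many closed halfspaces. -/
def IsPolyhedron (d : ℕ) (P : Set (Fin d → ℝ)) : Prop :=
  ∃ (n : ℕ) (a : Fin n → Fin d → ℝ) (b : Fin n → ℝ),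
    P = {y | ∀ i, dotR d (a i) y ≤ b i}

/-- The polar `P^∨ = {x : ⟨x,y⟩ ≤ 1 for all y ∈ P}`. -/
def polar (d : ℕ) (P : Set (Fin d → ℝ)) : Set (Fin d → ℝ) :=
  {x | ∀ y ∈ P, dotR d x y ≤ 1}


/-!
Multiplying the series of a simple cone `K = v + ℝ≥0 w₁ + ⋯ + ℝ≥0 w_d` by `∏ (1 - x^{wᵢ})`
telescopes it, one coordinate (with respect to the basis `w`) at a time, into the series of
the half-open parallelepiped `P_K`; since `P_K` has finitely many lattice points, that series
is the Laurent polynomial `σ_{P_K}`. Hence every `S ∈ PL` is carried by some Laurent polynomial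
`p` with `p ≠ 0` in `ℂ(x)` to a Laurent polynomial `f`, and `φ(S) := f / p` is well defined
because Laurent polynomials act commutatively and faithfully on their own series. Uniqueness
holds because `PL` is generated by the series `S_K`.
-/

variable {d : ℕ}

-- `LaurentPoly d` is a bare `Finsupp` with no ring structure: products are taken in the group
-- algebra, whose elements have `coeff : LaurentPoly d`.
local notation "ℂ[ℤ^" d "]" => AddMonoidAlgebra ℂ (Fin d → ℤ)

lemma algebraMap_X_ne_zero (i : Fin d) :
    algebraMap (MvPolynomial (Fin d) ℂ) (RatF d) (MvPolynomial.X i) ≠ 0 :=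
  (map_ne_zero_iff _ (IsFractionRing.injective _ _)).2 (MvPolynomial.X_ne_zero i)

lemma ratMon_add (u v : Fin d → ℤ) : ratMon d (u + v) = ratMon d u * ratMon d v := by
  simp only [ratMon, Pi.add_apply, zpow_add₀ (algebraMap_X_ne_zero _), Finset.prod_mul_distrib]

def ratMonHom (d : ℕ) : Multiplicative (Fin d → ℤ) →* RatF d where
  toFun w := ratMon d w.toAdd
  map_one' := by simp [ratMon]
  map_mul' u v := ratMon_add u v

def toRatHom (d : ℕ) : ℂ[ℤ^d] →ₐ[ℂ] RatF d := AddMonoidAlgebra.lift ℂ (RatF d) _ (ratMonHom d)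

lemma toRatHom_single (w : Fin d → ℤ) (c : ℂ) :
    toRatHom d (AddMonoidAlgebra.single w c) = c • ratMon d w := by
  simp [toRatHom, ratMonHom]

lemma toRat_eq (g : LaurentPoly d) : toRat d g = toRatHom d (AddMonoidAlgebra.ofCoeff g) := by
  rw [toRatHom, AddMonoidAlgebra.lift_apply', Finsupp.sum, toRat]
  refine Finset.sum_congr rfl fun w _ => ?_
  rw [IsScalarTower.algebraMap_apply ℂ (MvPolynomial (Fin d) ℂ), MvPolynomial.algebraMap_eq]
  rfl

def shiftHom (d : ℕ) : Multiplicative (Fin d → ℤ) →* Module.End ℂ ((Fin d → ℤ) → ℂ) where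
  toFun w := LinearMap.funLeft ℂ ℂ (· - w.toAdd)
  map_one' := by ext; simp
  map_mul' u v := by ext; simp [sub_sub]

def laurentAction (d : ℕ) : ℂ[ℤ^d] →ₐ[ℂ] Module.End ℂ ((Fin d → ℤ) → ℂ) :=
  AddMonoidAlgebra.lift ℂ _ _ (shiftHom d)

lemma laurentAction_single (w : Fin d → ℤ) (c : ℂ) (S : (Fin d → ℤ) → ℂ) :
    laurentAction d (AddMonoidAlgebra.single w c) S = fun m => c * S (m - w) := by
  ext; simp [laurentAction, shiftHom]

lemma actLP_eq (g : LaurentPoly d) (S : (Fin d → ℤ) → ℂ) :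
    actLP d g S = laurentAction d (AddMonoidAlgebra.ofCoeff g) S := by
  ext m
  simp [laurentAction, AddMonoidAlgebra.lift_apply, Finsupp.sum, shiftHom, actLP]

lemma laurentAction_seriesOf (p q : ℂ[ℤ^d]) :
    laurentAction d p (seriesOf d q.coeff) = seriesOf d (p * q).coeff := by
  have hδ : ∀ r : ℂ[ℤ^d],
      seriesOf d r.coeff = laurentAction d r (seriesOf d (1 : ℂ[ℤ^d]).coeff) := by
    intro r
    induction r using AddMonoidAlgebra.induction_linear with
    | zero => ext; simp [seriesOf]
    | add r s hr hs => rw [map_add, LinearMap.add_apply, ← hr, ← hs]; rfl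
    | single w c =>
      ext m
      simp [laurentAction_single, seriesOf, AddMonoidAlgebra.one_def, Finsupp.single_apply,
        sub_eq_zero, eq_comm]
  rw [hδ q, hδ (p * q), map_mul, Module.End.mul_apply]

lemma laurentAction_one_sub_single (u : Fin d → ℤ) (S : (Fin d → ℤ) → ℂ) :
    laurentAction d (1 - AddMonoidAlgebra.single u 1) S = fun m => S m - S (m - u) := by
  ext m
  simp [laurentAction_single]

lemma laurentAction_prod_one_sub_single {ι : Type*} [Fintype ι] [DecidableEq ι]
    (c : (Fin d → ℤ) → ι → ℝ) (u : ι → Fin d → ℤ)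
    (hc : ∀ m j, c (m - u j) = c m - Pi.single j 1) (F : ι → ℝ → ℂ) (s : Finset ι) :
    laurentAction d (∏ j ∈ s, (1 - AddMonoidAlgebra.single (u j) 1)) (fun m => ∏ i, F i (c m i)) =
      fun m => ∏ i, if i ∈ s then F i (c m i) - F i (c m i - 1) else F i (c m i) := by
  induction s using Finset.induction_on with
  | empty => simp
  | insert j s hj ih =>
    rw [Finset.prod_insert hj, map_mul, Module.End.mul_apply, ih, laurentAction_one_sub_single]
    ext m
    simp only [hc, Pi.sub_apply]
    rw [Fintype.prod_eq_mul_prod_compl j, Fintype.prod_eq_mul_prod_compl j (fun i => ite _ _ _),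
      Fintype.prod_eq_mul_prod_compl j (fun i => ite _ _ _)]
    have hshift : ∀ i ∈ ({j}ᶜ : Finset ι), ∀ t : ℝ,
        (if i ∈ s then F i (t - (Pi.single j (1 : ℝ) : ι → ℝ) i) -
            F i (t - (Pi.single j (1 : ℝ) : ι → ℝ) i - 1)
          else F i (t - (Pi.single j (1 : ℝ) : ι → ℝ) i)) =
        if i ∈ s then F i t - F i (t - 1) else F i t := by
      intro i hi t
      simp [show i ≠ j by simpa using hi]
    have hinsert : ∀ i ∈ ({j}ᶜ : Finset ι), ∀ t : ℝ,
        (if i ∈ insert j s then F i t - F i (t - 1) else F i t) =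
        if i ∈ s then F i t - F i (t - 1) else F i t := by
      intro i hi t
      simp [show i ≠ j by simpa using hi]
    rw [Finset.prod_congr rfl fun i hi => hshift i hi (c m i),
      Finset.prod_congr rfl fun i hi => hinsert i hi (c m i)]
    simp only [hj, if_false, Finset.mem_insert_self, if_true, Pi.single_eq_same]
    ring

lemma exists_eq_add_sum_smul_iff {ι E : Type*} [Fintype ι] [AddCommGroup E] [Module ℝ E]
    (b : Module.Basis ι ℝ E) (P : (ι → ℝ) → Prop) (v y : E) :
    (∃ lam, P lam ∧ y = v + ∑ i, lam i • b i) ↔ P (b.equivFun (y - v)) := by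
  constructor
  · rintro ⟨lam, hP, rfl⟩
    simpa [← Module.Basis.equivFun_symm_apply] using hP
  · exact fun hP => ⟨_, hP, by rw [← Module.Basis.equivFun_symm_apply, LinearEquiv.symm_apply_apply,
      add_sub_cancel]⟩

section Cone

variable {w : Fin d → Fin d → ℤ} (hw : LinearIndependent ℝ (fun i => toR d (w i)))

def coneBasis : Module.Basis (Fin d) ℝ (Fin d → ℝ) :=
  Module.Basis.mk hw (hw.span_eq_top_of_card_eq_finrank' (by simp)).ge

lemma coneBasis_apply (i : Fin d) : coneBasis hw i = toR d (w i) :=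
  Module.Basis.mk_apply _ _ _

lemma mem_coneSet_iff (v y : Fin d → ℝ) :
    y ∈ coneSet d d v w ↔ ∀ i, 0 ≤ (coneBasis hw).equivFun (y - v) i := by
  simp_rw [coneSet, ← coneBasis_apply hw]
  exact exists_eq_add_sum_smul_iff (coneBasis hw) (fun lam => ∀ i, 0 ≤ lam i) v y

lemma mem_parSet_iff (v y : Fin d → ℝ) :
    y ∈ parSet d v w ↔ ∀ i, 0 ≤ (coneBasis hw).equivFun (y - v) i ∧
      (coneBasis hw).equivFun (y - v) i < 1 := by
  simp_rw [parSet, ← coneBasis_apply hw]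
  exact exists_eq_add_sum_smul_iff (coneBasis hw) (fun lam => ∀ i, 0 ≤ lam i ∧ lam i < 1) v y

lemma coneBasis_equivFun_sub (v : Fin d → ℝ) (m : Fin d → ℤ) (j : Fin d) :
    (coneBasis hw).equivFun (toR d (m - w j) - v) =
      (coneBasis hw).equivFun (toR d m - v) - Pi.single j 1 := by
  have : toR d (m - w j) - v = (toR d m - v) - coneBasis hw j := by
    rw [coneBasis_apply]; ext; simp [toR]; ring
  ext i
  simp only [this, map_sub, Pi.sub_apply, Module.Basis.equivFun_self, Pi.single_apply, eq_comm]

end Cone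

lemma ite_nonneg_sub_ite_nonneg_sub_one (t : ℝ) :
    ((if 0 ≤ t then 1 else 0) - if 0 ≤ t - 1 then 1 else 0 : ℂ) =
      if 0 ≤ t ∧ t < 1 then 1 else 0 := by
  rcases lt_or_ge t 0 with ht | ht
  · simp [not_le.2 ht, show ¬0 ≤ t - 1 by linarith]
  rcases lt_or_ge t 1 with ht1 | ht1
  · simp [ht, ht1, show ¬0 ≤ t - 1 by linarith]
  · simp [ht, not_lt.2 ht1, show 0 ≤ t - 1 by linarith]

def coneDenom (w : Fin d → Fin d → ℤ) : ℂ[ℤ^d] := ∏ j, (1 - AddMonoidAlgebra.single (w j) 1)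

lemma laurentAction_coneDenom_genSeries_coneSet {w : Fin d → Fin d → ℤ}
    (hw : LinearIndependent ℝ (fun i => toR d (w i))) (v : Fin d → ℝ) :
    laurentAction d (coneDenom w) (genSeries d (coneSet d d v w)) = genSeries d (parSet d v w) := by
  set c : (Fin d → ℤ) → Fin d → ℝ := fun m => (coneBasis hw).equivFun (toR d m - v)
  have hK : genSeries d (coneSet d d v w) =
      fun m => ∏ i, (fun t : ℝ => if 0 ≤ t then (1 : ℂ) else 0) (c m i) := by
    ext m
    simp [c, genSeries, mem_coneSet_iff hw, Finset.prod_boole]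
  rw [hK, coneDenom, laurentAction_prod_one_sub_single c w (coneBasis_equivFun_sub hw v)
    (fun _ t => if 0 ≤ t then (1 : ℂ) else 0)]
  ext m
  simp only [Finset.mem_univ, if_true, ite_nonneg_sub_ite_nonneg_sub_one, Finset.prod_boole,
    true_implies, genSeries, mem_parSet_iff hw, c]

lemma ratMon_natCast (n : Fin d → ℕ) :
    ratMon d (fun i => (n i : ℤ)) =
      algebraMap _ _ (MvPolynomial.monomial (Finsupp.equivFunOnFinite.symm n) (1 : ℂ)) := by
  simp [ratMon, MvPolynomial.monomial_eq, Finsupp.prod_fintype, map_prod]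

lemma ratMon_ne_one {u : Fin d → ℤ} (hu : u ≠ 0) : ratMon d u ≠ 1 := by
  intro h
  have hsplit : u + (fun i => ((-u i).toNat : ℤ)) = fun i => ((u i).toNat : ℤ) := by
    ext i; simp only [Pi.add_apply]; omega
  have hmon : ratMon d (fun i => ((-u i).toNat : ℤ)) = ratMon d (fun i => ((u i).toNat : ℤ)) := by
    rw [← hsplit, ratMon_add, h, one_mul]
  rw [ratMon_natCast, ratMon_natCast] at hmon
  have hexp := Finsupp.equivFunOnFinite.symm.injective
    (MvPolynomial.monomial_left_injective one_ne_zero (IsFractionRing.injective _ _ hmon))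
  exact hu (funext fun i => by have := congrFun hexp i; rw [Pi.zero_apply]; omega)

lemma toRatHom_coneDenom (w : Fin d → Fin d → ℤ) :
    toRatHom d (coneDenom w) = ∏ i, (1 - ratMon d (w i)) := by
  simp [coneDenom, toRatHom_single]

lemma toRatHom_coneDenom_ne_zero {w : Fin d → Fin d → ℤ}
    (hw : LinearIndependent ℝ (fun i => toR d (w i))) : toRatHom d (coneDenom w) ≠ 0 := by
  rw [toRatHom_coneDenom]
  refine Finset.prod_ne_zero_iff.2 fun j _ => sub_ne_zero.2 (Ne.symm (ratMon_ne_one fun h => ?_))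
  exact hw.ne_zero j (funext fun i => by simp [toR, h])

lemma finite_integerPoints_parSet (v : Fin d → ℝ) (w : Fin d → Fin d → ℤ) :
    {m | toR d m ∈ parSet d v w}.Finite := by
  have hcpt : IsCompact ((fun lam : Fin d → ℝ => v + ∑ i, lam i • toR d (w i)) '' Set.Icc 0 1) :=
    isCompact_Icc.image (by fun_prop)
  have hemb : Topology.IsClosedEmbedding (toR d) :=
    Topology.IsClosedEmbedding.piMap fun _ => Int.isClosedEmbedding_coe_real
  refine (hemb.isCompact_preimage hcpt).finite_of_discrete.subset ?_
  rintro m ⟨lam, hlam, hm⟩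
  exact ⟨lam, ⟨fun i => (hlam i).1, fun i => (hlam i).2.le⟩, hm.symm⟩

lemma exists_seriesOf_eq_genSeries {S : Set (Fin d → ℝ)} (hS : {m | toR d m ∈ S}.Finite) :
    ∃ p : ℂ[ℤ^d], seriesOf d p.coeff = genSeries d S ∧ toRatHom d p = sigmaSet d S := by
  refine ⟨∑ m ∈ hS.toFinset, AddMonoidAlgebra.single m 1, ?_, ?_⟩
  · ext m
    simp [seriesOf, genSeries, Finsupp.single_apply]
  · rw [sigmaSet, finsum_mem_eq_finite_toFinset_sum _ hS]
    simp [toRatHom_single]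

lemma exists_laurentAction_coneDenom_genSeries_coneSet_eq {w : Fin d → Fin d → ℤ}
    (hw : LinearIndependent ℝ (fun i => toR d (w i))) (v : Fin d → ℝ) :
    ∃ f : ℂ[ℤ^d], laurentAction d (coneDenom w) (genSeries d (coneSet d d v w)) =
      seriesOf d f.coeff ∧ toRatHom d f = sigmaSet d (parSet d v w) := by
  obtain ⟨f, hf, hσ⟩ := exists_seriesOf_eq_genSeries (finite_integerPoints_parSet v w)
  exact ⟨f, by rw [laurentAction_coneDenom_genSeries_coneSet hw, hf], hσ⟩

def IsRationalSeries (S : (Fin d → ℤ) → ℂ) : Prop :=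
  ∃ pf : ℂ[ℤ^d] × ℂ[ℤ^d], toRatHom d pf.1 ≠ 0 ∧ laurentAction d pf.1 S = seriesOf d pf.2.coeff

def ratOfSeries (d : ℕ) (S : (Fin d → ℤ) → ℂ) : RatF d :=
  if h : IsRationalSeries S then toRatHom d h.choose.2 / toRatHom d h.choose.1 else 0

section RationalSeries

variable {S T : (Fin d → ℤ) → ℂ} {p q f g : ℂ[ℤ^d]}

lemma seriesOf_coeff_injective : Function.Injective fun f : ℂ[ℤ^d] => seriesOf d f.coeff :=
  fun _ _ h => AddMonoidAlgebra.coeff_injective (Finsupp.ext (congrFun h))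

lemma div_eq_div_of_laurentAction_eq (hp : toRatHom d p ≠ 0) (hq : toRatHom d q ≠ 0)
    (hpS : laurentAction d p S = seriesOf d f.coeff)
    (hqS : laurentAction d q S = seriesOf d g.coeff) :
    toRatHom d f / toRatHom d p = toRatHom d g / toRatHom d q := by
  have hcross : q * f = p * g := seriesOf_coeff_injective <| by
    simp only [← laurentAction_seriesOf, ← hpS, ← hqS, ← Module.End.mul_apply, ← map_mul, mul_comm]
  rw [div_eq_div_iff hp hq, ← map_mul, ← map_mul, mul_comm f, mul_comm g, hcross, mul_comm]

lemma ratOfSeries_eq (hp : toRatHom d p ≠ 0) (hpS : laurentAction d p S = seriesOf d f.coeff) :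
    ratOfSeries d S = toRatHom d f / toRatHom d p := by
  have h : IsRationalSeries S := ⟨(p, f), hp, hpS⟩
  rw [ratOfSeries, dif_pos h]
  exact div_eq_div_of_laurentAction_eq h.choose_spec.1 hp h.choose_spec.2 hpS

lemma laurentAction_mul_add_eq_seriesOf (hpS : laurentAction d p S = seriesOf d f.coeff)
    (hqT : laurentAction d q T = seriesOf d g.coeff) :
    laurentAction d (p * q) (S + T) = seriesOf d (q * f + p * g).coeff := by
  have hS : laurentAction d (p * q) S = seriesOf d (q * f).coeff := by
    rw [mul_comm, map_mul, Module.End.mul_apply, hpS, laurentAction_seriesOf]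
  have hT : laurentAction d (p * q) T = seriesOf d (p * g).coeff := by
    rw [map_mul, Module.End.mul_apply, hqT, laurentAction_seriesOf]
  rw [map_add, hS, hT]
  rfl

lemma laurentAction_laurentAction_eq_seriesOf (r : ℂ[ℤ^d])
    (hpS : laurentAction d p S = seriesOf d f.coeff) :
    laurentAction d p (laurentAction d r S) = seriesOf d (r * f).coeff := by
  rw [← Module.End.mul_apply, ← map_mul, mul_comm, map_mul, Module.End.mul_apply, hpS,
    laurentAction_seriesOf]

lemma IsRationalSeries.add (hS : IsRationalSeries S) (hT : IsRationalSeries T) :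
    IsRationalSeries (S + T) := by
  obtain ⟨⟨p, f⟩, hp, hpS⟩ := hS
  obtain ⟨⟨q, g⟩, hq, hqT⟩ := hT
  exact ⟨(p * q, q * f + p * g), by simp [hp, hq], laurentAction_mul_add_eq_seriesOf hpS hqT⟩

lemma IsRationalSeries.laurentAction (r : ℂ[ℤ^d]) (hS : IsRationalSeries S) :
    IsRationalSeries (laurentAction d r S) := by
  obtain ⟨⟨p, f⟩, hp, hpS⟩ := hS
  exact ⟨(p, r * f), hp, laurentAction_laurentAction_eq_seriesOf r hpS⟩

lemma ratOfSeries_add (hS : IsRationalSeries S) (hT : IsRationalSeries T) :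
    ratOfSeries d (S + T) = ratOfSeries d S + ratOfSeries d T := by
  obtain ⟨⟨p, f⟩, hp, hpS⟩ := hS
  obtain ⟨⟨q, g⟩, hq, hqT⟩ := hT
  rw [ratOfSeries_eq (by simp [hp, hq]) (laurentAction_mul_add_eq_seriesOf hpS hqT),
    ratOfSeries_eq hp hpS, ratOfSeries_eq hq hqT, div_add_div _ _ hp hq]
  simp only [map_add, map_mul]
  ring

lemma ratOfSeries_laurentAction (r : ℂ[ℤ^d]) (hS : IsRationalSeries S) :
    ratOfSeries d (laurentAction d r S) = toRatHom d r * ratOfSeries d S := by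
  obtain ⟨⟨p, f⟩, hp, hpS⟩ := hS
  rw [ratOfSeries_eq hp (laurentAction_laurentAction_eq_seriesOf r hpS), ratOfSeries_eq hp hpS,
    map_mul, mul_div_assoc]

end RationalSeries

lemma isRationalSeries_genSeries_coneSet {w : Fin d → Fin d → ℤ}
    (hw : LinearIndependent ℝ (fun i => toR d (w i)))
    (v : Fin d → ℝ) :
    IsRationalSeries (genSeries d (coneSet d d v w)) := by
  obtain ⟨f, hf, -⟩ := exists_laurentAction_coneDenom_genSeries_coneSet_eq hw v
  exact ⟨(_, f), toRatHom_coneDenom_ne_zero hw, hf⟩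

lemma ratOfSeries_genSeries_coneSet {w : Fin d → Fin d → ℤ}
    (hw : LinearIndependent ℝ (fun i => toR d (w i)))
    (v : Fin d → ℝ) :
    ratOfSeries d (genSeries d (coneSet d d v w)) =
      sigmaSet d (parSet d v w) / ∏ i, (1 - ratMon d (w i)) := by
  obtain ⟨f, hf, hσ⟩ := exists_laurentAction_coneDenom_genSeries_coneSet_eq hw v
  rw [ratOfSeries_eq (toRatHom_coneDenom_ne_zero hw) hf, hσ, toRatHom_coneDenom]

lemma MemPL.isRationalSeries {S : (Fin d → ℤ) → ℂ} (hS : MemPL d S) : IsRationalSeries S := by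
  obtain ⟨n, g, K, hK, rfl⟩ := hS
  refine Finset.sum_induction _ IsRationalSeries (fun _ _ => IsRationalSeries.add)
    ⟨(1, 0), by simp, by ext; simp [seriesOf]⟩ fun i _ => ?_
  obtain ⟨v, w, hw, hKi⟩ := hK i
  rw [hKi, actLP_eq]
  exact (isRationalSeries_genSeries_coneSet hw v).laurentAction _

lemma isPhi_ratOfSeries : IsPhi d (ratOfSeries d) := by
  refine ⟨fun S T hS hT => ratOfSeries_add hS.isRationalSeries hT.isRationalSeries,
    fun g S hS => ?_, fun v w hw => ratOfSeries_genSeries_coneSet hw v⟩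
  rw [actLP_eq, toRat_eq]
  exact ratOfSeries_laurentAction _ hS.isRationalSeries

lemma memPL_zero : MemPL d 0 :=
  ⟨0, Fin.elim0, Fin.elim0, fun i => i.elim0, by simp⟩

lemma memPL_actLP_genSeries (g : LaurentPoly d) {K : Set (Fin d → ℝ)} (hK : IsSimpleCone d K) :
    MemPL d (actLP d g (genSeries d K)) :=
  ⟨1, fun _ => g, fun _ => K, fun _ => hK, by simp⟩

lemma memPL_genSeries {K : Set (Fin d → ℝ)} (hK : IsSimpleCone d K) : MemPL d (genSeries d K) := by
  simpa [actLP_eq, ← AddMonoidAlgebra.one_def] using memPL_actLP_genSeries (Finsupp.single 0 1) hK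

section IsPhi

variable {φ : ((Fin d → ℤ) → ℂ) → RatF d}

lemma IsPhi.map_zero (hφ : IsPhi d φ) : φ 0 = 0 := by
  simpa using hφ.1 0 0 memPL_zero memPL_zero

lemma IsPhi.map_sum_actLP_genSeries (hφ : IsPhi d φ) {n : ℕ} (g : Fin n → LaurentPoly d)
    (K : Fin n → Set (Fin d → ℝ)) (hK : ∀ i, IsSimpleCone d (K i)) :
    φ (∑ i, actLP d (g i) (genSeries d (K i))) = ∑ i, toRat d (g i) * φ (genSeries d (K i)) := by
  induction n with
  | zero => simp [hφ.map_zero]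
  | succ n ih =>
    rw [Fin.sum_univ_succ, Fin.sum_univ_succ, hφ.1 _ _ (memPL_actLP_genSeries _ (hK 0))
      ⟨n, _, _, fun i => hK i.succ, rfl⟩, hφ.2.1 _ _ (memPL_genSeries (hK 0)),
      ih _ _ fun i => hK i.succ]

lemma IsPhi.eq_of_memPL {ψ : ((Fin d → ℤ) → ℂ) → RatF d} (hφ : IsPhi d φ) (hψ : IsPhi d ψ)
    {S : (Fin d → ℤ) → ℂ} (hS : MemPL d S) : φ S = ψ S := by
  obtain ⟨n, g, K, hK, rfl⟩ := hS
  rw [hφ.map_sum_actLP_genSeries g K hK, hψ.map_sum_actLP_genSeries g K hK]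
  refine Finset.sum_congr rfl fun i _ => ?_
  obtain ⟨v, w, hw, hKi⟩ := hK i
  rw [hKi, hφ.2.2 v w hw, hψ.2.2 v w hw]

end IsPhi

/-- **Theorem of Brion/Ishida.** There is a unique
`ℂ[x₁^{±1},…,x_d^{±1}]`-module homomorphism `φ : PL → ℂ(x₁,…,x_d)` with
`φ(S_K) = σ_{P_K}(x) / Π (1 - x^{wᵢ})` for every simple rational cone `K`. -/
theorem statement4 (d : ℕ) :
    ∃ φ : ((Fin d → ℤ) → ℂ) → RatF d, IsPhi d φ ∧
      ∀ φ' : ((Fin d → ℤ) → ℂ) → RatF d, IsPhi d φ' →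
        ∀ S, MemPL d S → φ' S = φ S :=
  ⟨ratOfSeries d, isPhi_ratOfSeries,
    fun _ hφ' _ hS => hφ'.eq_of_memPL isPhi_ratOfSeries hS⟩
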